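/- Let G be a cubic graph (3-regular finite simple graph) of order n and size m. Then A(G;x) = A_{−3}(G) x^{n−3} + A_{−1}(G) x^{n−1} + A_1(G) x^{n+1} + A_3(G) x^{n+3} (all other coefficients vanish), with A_{−3}(G) = n < m ≤ A_{−1}(G) and A_1(G) ≥ A_3(G). -/

import Mathlib

/-!
In a `d`-regular graph `δ_S(v) - δ_{S̄}(v) = 2 δ_S(v) - d`, so `A_k` vanishes unless `k ≡ d`
(mod 2). The value `k_S = -d` is attained only at a vertex with no neighbour in `S`, which for
connected `⟨S⟩` forces `S` to be a singleton; every edge is an exact `(2 - d)`-alliance; and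
`2m = dn`. An exact `d`-alliance is closed under adjacency, hence a connected component of `G`;
deleting a vertex that does not disconnect it leaves an exact `(d - 2)`-alliance from which the
component is recovered, so `A_d ≤ A_{d-2}`.
-/

open Polynomial Finset

/-- Number of neighbors of `v` inside the set `S` (denoted δ_S(v)). -/
def SimpleGraph.degIn {V : Type*} [Fintype V] [DecidableEq V]
    (G : SimpleGraph V) [DecidableRel G.Adj] (S : Finset V) (v : V) : ℕ :=
  (S.filter (fun u => G.Adj v u)).card

/-- Number of neighbors of `v` outside the set `S` (denoted δ_{S̄}(v)). -/
def SimpleGraph.degOut {V : Type*} [Fintype V] [DecidableEq V]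
    (G : SimpleGraph V) [DecidableRel G.Adj] (S : Finset V) (v : V) : ℕ :=
  (Sᶜ.filter (fun u => G.Adj v u)).card

/-- `S` is an exact defensive `k`-alliance in `G`: the induced subgraph `⟨S⟩` is connected
(in particular `S` is nonempty) and `k = k_S = min_{v ∈ S} (δ_S(v) - δ_{S̄}(v))`. -/
def SimpleGraph.IsExactAlliance {V : Type*} [Fintype V] [DecidableEq V]
    (G : SimpleGraph V) [DecidableRel G.Adj] (S : Finset V) (k : ℤ) : Prop :=
  (G.induce (S : Set V)).Connected ∧
    (∀ v ∈ S, k ≤ (G.degIn S v : ℤ) - (G.degOut S v : ℤ)) ∧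
    (∃ v ∈ S, (G.degIn S v : ℤ) - (G.degOut S v : ℤ) = k)

/-- `A_k(G)`: the number of exact defensive `k`-alliances in `G`. -/
noncomputable def SimpleGraph.allianceCoeff {V : Type*} [Fintype V] [DecidableEq V]
    (G : SimpleGraph V) [DecidableRel G.Adj] (k : ℤ) : ℕ :=
  Set.ncard {S : Finset V | G.IsExactAlliance S k}

/-- The alliance polynomial `A(G;x) = Σ_{k=-Δ}^{Δ} A_k(G) x^{n+k}`, where `n` is the order and
`Δ` the maximum degree of `G`, regarded as a real polynomial. -/
noncomputable def SimpleGraph.alliancePoly {V : Type*} [Fintype V] [DecidableEq V]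
    (G : SimpleGraph V) [DecidableRel G.Adj] : Polynomial ℝ :=
  ∑ k ∈ Finset.Icc (-(G.maxDegree : ℤ)) (G.maxDegree : ℤ),
    (G.allianceCoeff k : ℝ) • X ^ (((Fintype.card V : ℤ) + k).toNat)

namespace SimpleGraph

section Induce

variable {V : Type*} {G : SimpleGraph V}

theorem Connected.exists_connected_induce_diff_singleton {s : Set V} [Finite s]
    (hs : (G.induce s).Connected) (hs2 : s.Nontrivial) :
    ∃ v ∈ s, (G.induce (s \ {v})).Connected := by
  have : Nontrivial s := hs2.coe_sort
  obtain ⟨v, hv⟩ := hs.exists_connected_induce_compl_singleton_of_finite_nontrivial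
  let f : (G.induce s).induce {v}ᶜ →g G.induce (s \ {v.1}) :=
    { toFun := fun x => ⟨x.1.1, x.1.2, fun h => x.2 (Subtype.ext h)⟩
      map_rel' := id }
  refine ⟨v, v.2, hv.map f ?_⟩
  rintro ⟨y, hys, hyv⟩
  exact ⟨⟨⟨y, hys⟩, fun h => hyv (congrArg Subtype.val h)⟩, rfl⟩

theorem Connected.eq_supp_of_forall_adj_mem {s : Set V} (hs : (G.induce s).Connected)
    (hcl : ∀ x ∈ s, ∀ y, G.Adj x y → y ∈ s) {u : V} (hu : u ∈ s) :
    s = (G.connectedComponentMk u).supp := by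
  ext y
  rw [ConnectedComponent.mem_supp_iff, ConnectedComponent.eq]
  refine ⟨fun hy => (hs.preconnected ⟨y, hy⟩ ⟨u, hu⟩).map (Embedding.induce s).toHom,
    fun hyu => ?_⟩
  replace hyu := (reachable_iff_reflTransGen u y).mp hyu.symm
  induction hyu with
  | refl => exact hu
  | tail _ hadj ih => exact hcl _ ih _ hadj

end Induce

section Regular

variable {V : Type*} [Fintype V] {G : SimpleGraph V} [DecidableRel G.Adj] {d : ℕ}

theorem IsRegularOfDegree.card_lt_card_edgeFinset [Nonempty V] (hreg : G.IsRegularOfDegree d)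
    (hd : 2 < d) : Fintype.card V < #G.edgeFinset := by
  have h := G.sum_degrees_eq_twice_card_edges
  simp only [hreg.degree_eq, sum_const, card_univ, smul_eq_mul] at h
  have := Fintype.card_pos (α := V)
  nlinarith

end Regular

section Alliance

variable {V : Type*} [Fintype V] [DecidableEq V] {G : SimpleGraph V} [DecidableRel G.Adj]
  {S : Finset V} {d : ℕ} {k : ℤ}

theorem degIn_add_degOut (S : Finset V) (v : V) : G.degIn S v + G.degOut S v = G.degree v := by
  rw [degIn, degOut, ← card_union_of_disjoint (disjoint_filter_filter disjoint_compl_right),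
    ← filter_union, union_compl, ← neighborFinset_eq_filter, card_neighborFinset_eq_degree]

theorem degOut_eq_zero_iff {v : V} : G.degOut S v = 0 ↔ ∀ u, G.Adj v u → u ∈ S := by
  simp only [degOut, card_eq_zero, filter_eq_empty_iff, mem_compl]
  exact forall_congr' fun _ => not_imp_not

theorem degIn_erase (v x : V) :
    G.degIn (S.erase v) x = if v ∈ S ∧ G.Adj x v then G.degIn S x - 1 else G.degIn S x := by
  simp only [degIn, filter_erase, card_erase_eq_ite, mem_filter]

theorem IsRegularOfDegree.degIn_add_degOut (hreg : G.IsRegularOfDegree d) (S : Finset V)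
    (v : V) : G.degIn S v + G.degOut S v = d :=
  (SimpleGraph.degIn_add_degOut S v).trans (hreg v)

theorem IsRegularOfDegree.degIn_sub_degOut (hreg : G.IsRegularOfDegree d) (S : Finset V) (v : V) :
    (G.degIn S v : ℤ) - G.degOut S v = 2 * G.degIn S v - d := by
  have := hreg.degIn_add_degOut S v
  omega

theorem IsRegularOfDegree.isExactAlliance_iff (hreg : G.IsRegularOfDegree d) :
    G.IsExactAlliance S k ↔ (G.induce (S : Set V)).Connected ∧
      (∀ v ∈ S, k ≤ 2 * G.degIn S v - d) ∧ ∃ v ∈ S, 2 * (G.degIn S v : ℤ) - d = k := by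
  simp only [IsExactAlliance, hreg.degIn_sub_degOut]

theorem IsExactAlliance.nonempty (hS : G.IsExactAlliance S k) : S.Nonempty := by
  obtain ⟨v⟩ := hS.1.nonempty
  exact ⟨v, by exact_mod_cast v.2⟩

theorem IsRegularOfDegree.allianceCoeff_eq_zero_of_odd (hreg : G.IsRegularOfDegree d)
    (hk : Odd (k + d)) : G.allianceCoeff k = 0 := by
  obtain ⟨m, hm⟩ := hk
  suffices {S : Finset V | G.IsExactAlliance S k} = ∅ by
    rw [allianceCoeff, this, Set.ncard_empty]
  refine Set.eq_empty_of_forall_notMem fun S hS => ?_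
  obtain ⟨-, -, v, -, hv⟩ := hreg.isExactAlliance_iff.mp hS
  omega

theorem IsRegularOfDegree.isExactAlliance_singleton (hreg : G.IsRegularOfDegree d) (v : V) :
    G.IsExactAlliance {v} (-d) := by
  have hin : G.degIn {v} v = 0 := by simp [degIn, filter_singleton]
  refine hreg.isExactAlliance_iff.mpr ⟨?_, ?_, v, mem_singleton_self v, by simp [hin]⟩
  · rw [coe_singleton, induce_singleton_eq_top]
    exact connected_top
  · simp

theorem IsRegularOfDegree.isExactAlliance_neg_iff (hreg : G.IsRegularOfDegree d) :
    G.IsExactAlliance S (-d) ↔ ∃ v, S = {v} := by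
  refine ⟨fun hS => ?_, by rintro ⟨v, rfl⟩; exact hreg.isExactAlliance_singleton v⟩
  obtain ⟨hconn, -, v, hv, hk⟩ := hreg.isExactAlliance_iff.mp hS
  refine ⟨v, eq_singleton_iff_unique_mem.mpr ⟨hv, fun u hu => ?_⟩⟩
  by_contra huv
  have : Nontrivial (S : Set V) := ⟨⟨u, hu⟩, ⟨v, hv⟩, by simpa [Subtype.ext_iff] using huv⟩
  obtain ⟨⟨w, hw⟩, hvw⟩ := hconn.preconnected.exists_adj_of_nontrivial ⟨v, hv⟩
  have : 0 < G.degIn S v := card_pos.mpr ⟨w, mem_filter.mpr ⟨hw, by simpa using hvw⟩⟩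
  omega

theorem IsRegularOfDegree.allianceCoeff_neg (hreg : G.IsRegularOfDegree d) :
    G.allianceCoeff (-d) = Fintype.card V := by
  have : {S : Finset V | G.IsExactAlliance S (-d)} = Set.range ({·}) := by
    ext S
    simp [hreg.isExactAlliance_neg_iff, eq_comm]
  rw [allianceCoeff, this, ← Set.image_univ, Set.ncard_image_of_injective _ singleton_injective,
    Set.ncard_univ, Nat.card_eq_fintype_card]

theorem IsRegularOfDegree.isExactAlliance_pair (hreg : G.IsRegularOfDegree d) {a b : V}
    (hab : G.Adj a b) : G.IsExactAlliance {a, b} (2 - d) := by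
  have hdeg : ∀ x ∈ ({a, b} : Finset V), G.degIn {a, b} x = 1 := by
    simp [degIn, filter_insert, filter_singleton, hab, hab.symm]
  refine hreg.isExactAlliance_iff.mpr ⟨?_, fun v hv => ?_, a, mem_insert_self a _, ?_⟩
  · rw [coe_pair]
    exact induce_pair_connected_of_adj hab
  · rw [hdeg v hv]
    omega
  · rw [hdeg a (mem_insert_self a _)]
    omega

theorem IsRegularOfDegree.card_edgeFinset_le_allianceCoeff (hreg : G.IsRegularOfDegree d) :
    #G.edgeFinset ≤ G.allianceCoeff (2 - d) := by
  have hinj : Function.Injective (Sym2.toFinset : Sym2 V → Finset V) := fun z z' h =>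
    Sym2.ext fun a => by rw [← Sym2.mem_toFinset, h, Sym2.mem_toFinset]
  rw [← Set.ncard_coe_finset, coe_edgeFinset, allianceCoeff]
  refine Set.ncard_le_ncard_of_injOn Sym2.toFinset (fun e he => ?_) hinj.injOn
  induction e using Sym2.ind with
  | _ a b => rw [Sym2.toFinset_mk_eq]; exact hreg.isExactAlliance_pair he

theorem IsRegularOfDegree.degIn_eq_of_isExactAlliance (hreg : G.IsRegularOfDegree d)
    (hS : G.IsExactAlliance S d) {v : V} (hv : v ∈ S) : G.degIn S v = d := by
  have := hreg.isExactAlliance_iff.mp hS |>.2.1 v hv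
  have := hreg.degIn_add_degOut S v
  omega

theorem IsRegularOfDegree.mem_of_adj_of_isExactAlliance (hreg : G.IsRegularOfDegree d)
    (hS : G.IsExactAlliance S d) {x y : V} (hx : x ∈ S) (hxy : G.Adj x y) : y ∈ S := by
  refine degOut_eq_zero_iff.mp ?_ y hxy
  have := hreg.degIn_add_degOut S x
  rw [hreg.degIn_eq_of_isExactAlliance hS hx] at this
  omega

theorem IsRegularOfDegree.exists_isExactAlliance_erase (hreg : G.IsRegularOfDegree d)
    (hd : 0 < d) (hS : G.IsExactAlliance S d) :
    ∃ v ∈ S, G.IsExactAlliance (S.erase v) (d - 2) := by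
  have hdegS : ∀ {x}, x ∈ S → G.degIn S x = d := hreg.degIn_eq_of_isExactAlliance hS
  have hclosed : ∀ {x y}, x ∈ S → G.Adj x y → y ∈ S := hreg.mem_of_adj_of_isExactAlliance hS
  have hnbr : ∀ v, ∃ u, G.Adj v u := fun v =>
    (G.degree_pos_iff_exists_adj v).mp (by rw [hreg v]; exact hd)
  obtain ⟨w, hw⟩ := hS.nonempty
  obtain ⟨y, hwy⟩ := hnbr w
  have hnt : (S : Set V).Nontrivial := ⟨w, hw, y, hclosed hw hwy, hwy.ne⟩
  obtain ⟨v, hv, hconn⟩ := hS.1.exists_connected_induce_diff_singleton hnt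
  obtain ⟨u, hvu⟩ := hnbr v
  have hu : u ∈ S.erase v := mem_erase.mpr ⟨hvu.ne', hclosed hv hvu⟩
  refine ⟨v, hv, hreg.isExactAlliance_iff.mpr ⟨by rwa [coe_erase], fun x hx => ?_, u, hu, ?_⟩⟩
  · rw [degIn_erase, hdegS (mem_of_mem_erase hx)]
    split_ifs <;> omega
  · rw [degIn_erase, if_pos ⟨hv, hvu.symm⟩, hdegS (mem_of_mem_erase hu)]
    omega

theorem IsRegularOfDegree.allianceCoeff_le_allianceCoeff_sub_two (hreg : G.IsRegularOfDegree d)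
    (hd : 0 < d) : G.allianceCoeff d ≤ G.allianceCoeff (d - 2) := by
  choose v _ hv using fun S : {S : Finset V | G.IsExactAlliance S d} =>
    hreg.exists_isExactAlliance_erase hd S.2
  refine Nat.card_le_card_of_injective (fun S => ⟨S.1.erase (v S), hv S⟩) fun S T hST => ?_
  replace hST : S.1.erase (v S) = T.1.erase (v T) := congrArg Subtype.val hST
  obtain ⟨u, hu⟩ := (hv S).nonempty
  have huT : u ∈ T.1 := mem_of_mem_erase (hST ▸ hu)
  have hsupp := fun (R : {S : Finset V | G.IsExactAlliance S d}) (huR : u ∈ R.1) =>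
    R.2.1.eq_supp_of_forall_adj_mem
      (fun _ hx _ hxy => hreg.mem_of_adj_of_isExactAlliance R.2 hx hxy) huR
  exact Subtype.ext (coe_injective ((hsupp S (mem_of_mem_erase hu)).trans (hsupp T huT).symm))

theorem IsRegularOfDegree.alliancePoly_eq_of_three [Nonempty V] (hreg : G.IsRegularOfDegree 3) :
    G.alliancePoly =
      (G.allianceCoeff (-3) : ℝ) • (X : ℝ[X]) ^ (Fintype.card V - 3) +
      (G.allianceCoeff (-1) : ℝ) • (X : ℝ[X]) ^ (Fintype.card V - 1) +
      (G.allianceCoeff 1 : ℝ) • (X : ℝ[X]) ^ (Fintype.card V + 1) +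
      (G.allianceCoeff 3 : ℝ) • (X : ℝ[X]) ^ (Fintype.card V + 3) := by
  have hodd : ∀ k : ℤ, Odd (k + 3) → G.allianceCoeff k = 0 := fun k hk =>
    hreg.allianceCoeff_eq_zero_of_odd (by exact_mod_cast hk)
  have hIcc : Icc (-3 : ℤ) 3 = {-3, -2, -1, 0, 1, 2, 3} := by decide
  have h3 : ((Fintype.card V : ℤ) + -3).toNat = Fintype.card V - 3 := by omega
  have h1 : ((Fintype.card V : ℤ) + -1).toNat = Fintype.card V - 1 := by omega
  have h3' : ((Fintype.card V : ℤ) + 3).toNat = Fintype.card V + 3 := by omega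
  rw [alliancePoly, hreg.maxDegree_eq]
  push_cast
  simp [hIcc, hodd (-2) ⟨0, rfl⟩, hodd 0 ⟨1, rfl⟩, hodd 2 ⟨2, rfl⟩, h3, h1, h3', add_assoc]

end Alliance

end SimpleGraph

/-- For a cubic graph `G` of order `n` and size `m`:
`A(G;x) = A_{-3} x^{n-3} + A_{-1} x^{n-1} + A_1 x^{n+1} + A_3 x^{n+3}`, with
`A_{-3}(G) = n < m ≤ A_{-1}(G)` and `A_1(G) ≥ A_3(G)`. -/
theorem alliancePoly_cubic
    {V : Type*} [Fintype V] [DecidableEq V] [Nonempty V]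
    (G : SimpleGraph V) [DecidableRel G.Adj]
    (hreg : G.IsRegularOfDegree 3) :
    G.alliancePoly =
      (G.allianceCoeff (-3) : ℝ) • (Polynomial.X : Polynomial ℝ) ^ (Fintype.card V - 3) +
      (G.allianceCoeff (-1) : ℝ) • (Polynomial.X : Polynomial ℝ) ^ (Fintype.card V - 1) +
      (G.allianceCoeff 1 : ℝ) • (Polynomial.X : Polynomial ℝ) ^ (Fintype.card V + 1) +
      (G.allianceCoeff 3 : ℝ) • (Polynomial.X : Polynomial ℝ) ^ (Fintype.card V + 3) ∧
    G.allianceCoeff (-3) = Fintype.card V ∧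
    Fintype.card V < G.edgeFinset.card ∧
    G.edgeFinset.card ≤ G.allianceCoeff (-1) ∧
    G.allianceCoeff 3 ≤ G.allianceCoeff 1 :=
  ⟨hreg.alliancePoly_eq_of_three, hreg.allianceCoeff_neg,
    hreg.card_lt_card_edgeFinset (by norm_num), hreg.card_edgeFinset_le_allianceCoeff,
    hreg.allianceCoeff_le_allianceCoeff_sub_two (by norm_num)⟩
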